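/- In the Weyl algebra ℂ[w, ∂_w], for any polynomial g and integer p ≥ 1, one has g(-w∂_w)(w²∂_w)^{p-1} w = w^p g(-w∂_w - p) ∏_{l=1}^{p-1}(w∂_w + l). -/

import Mathlib

/-!
Write `E = w∂_w` for the Euler operator. The Weyl relation says `w (E + 1) = E w`, hence
`w^n (E + n) = E w^n`, and therefore `f(-E) w^n = w^n f(-E - n)` for every polynomial `f`.
Since `w²∂_w = w E`, moving the `w`s of `(w E)^{p-1} w` to the left one at a time turns the `E`s
into the factors `E + l`, which gives `(w E)^{p-1} w = w^p ∏_{l=1}^{p-1} (E + l)`.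
-/

/-- The defining relation of the Weyl algebra `ℂ[w,∂_w]`: `∂ w = w ∂ + 1`. -/
def WeylRel : FreeAlgebra ℂ Bool → FreeAlgebra ℂ Bool → Prop :=
  fun x y => x = FreeAlgebra.ι ℂ true * FreeAlgebra.ι ℂ false ∧
    y = FreeAlgebra.ι ℂ false * FreeAlgebra.ι ℂ true + 1

/-- The Weyl algebra `ℂ[w,∂_w]` with `∂_w w - w ∂_w = 1`. -/
abbrev Weyl := RingQuot WeylRel

/-- The generator `∂_w` of the Weyl algebra. -/
def dw : Weyl := RingQuot.mkAlgHom ℂ WeylRel (FreeAlgebra.ι ℂ true)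

/-- The generator `w` of the Weyl algebra. -/
def ww : Weyl := RingQuot.mkAlgHom ℂ WeylRel (FreeAlgebra.ι ℂ false)

open Polynomial

theorem SemiconjBy.aeval {R A : Type*} [CommSemiring R] [Semiring A] [Algebra R A] {a x y : A}
    (h : SemiconjBy a x y) (f : R[X]) : SemiconjBy a (aeval x f) (aeval y f) := by
  induction f using Polynomial.induction_on' with
  | add f g hf hg => simpa only [map_add] using hf.add_right hg
  | monomial n c =>
    simp only [aeval_monomial]
    exact SemiconjBy.mul_right (Algebra.commute_algebraMap_right c a) (h.pow_right n)

section EulerShift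

variable {R A : Type*} [CommRing R] [Ring A] [Algebra R A] {E w : A}

theorem SemiconjBy.pow_add_natCast (h : SemiconjBy w (E + 1) E) (n : ℕ) :
    SemiconjBy (w ^ n) (E + n) E := by
  induction n with
  | zero => simp
  | succ n ih =>
    have hstep : SemiconjBy w (E + (n + 1 : ℕ)) (E + n) := by
      rw [Nat.cast_succ, add_comm (n : A), ← add_assoc]
      exact h.add_right (Nat.cast_commute n w).symm
    rw [pow_succ]
    exact ih.mul_left hstep

theorem aeval_neg_mul_pow (h : SemiconjBy w (E + 1) E) (f : R[X]) (n : ℕ) :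
    aeval (-E) f * w ^ n = w ^ n * aeval (-E - n) f := by
  have hneg : SemiconjBy (w ^ n) (-E - n) (-E) := by
    rw [← neg_add']
    exact (h.pow_add_natCast n).neg_right
  exact ((hneg.aeval f).eq).symm

theorem mul_pow_mul_eq_pow_mul_prod (h : SemiconjBy w (E + 1) E) (k : ℕ) :
    (w * E) ^ k * w = w ^ (k + 1) * ((List.range k).map fun l => E + ((l + 1 : ℕ) : A)).prod := by
  induction k with
  | zero => simp
  | succ k ih =>
    have hcomm : Commute (E + ((k + 1 : ℕ) : A))
        ((List.range k).map fun l => E + ((l + 1 : ℕ) : A)).prod := by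
      refine Commute.list_prod_right _ _ fun x hx => ?_
      obtain ⟨l, -, rfl⟩ := List.mem_map.mp hx
      exact ((Commute.refl E).add_right (Nat.cast_commute _ E).symm).add_left
        (Nat.cast_commute _ _)
    rw [pow_succ', mul_assoc, ih, ← mul_assoc, mul_assoc w, ← (h.pow_add_natCast (k + 1)).eq,
      ← mul_assoc, ← pow_succ', mul_assoc, hcomm.eq, List.range_succ, List.map_append,
      List.prod_append, List.map_singleton, List.prod_singleton]

end EulerShift

theorem dw_mul_ww : dw * ww = ww * dw + 1 := by
  have hrel : WeylRel (FreeAlgebra.ι ℂ true * FreeAlgebra.ι ℂ false)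
      (FreeAlgebra.ι ℂ false * FreeAlgebra.ι ℂ true + 1) := ⟨rfl, rfl⟩
  simpa only [dw, ww, map_mul, map_add, map_one] using RingQuot.mkAlgHom_rel ℂ hrel

theorem semiconjBy_ww_euler : SemiconjBy ww (ww * dw + 1) (ww * dw) := by
  rw [SemiconjBy, mul_assoc, dw_mul_ww]

/-- In `ℂ[w,∂_w]`, for any polynomial `g` and `p ≥ 1`:
`g(-w∂_w)(w²∂_w)^{p-1} w = w^p g(-w∂_w - p) ∏_{l=1}^{p-1}(w∂_w + l)`. -/
theorem stmt17 (g : Polynomial ℂ) (p : ℕ) (hp : 1 ≤ p) :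
    Polynomial.aeval (-(ww * dw)) g * (ww ^ 2 * dw) ^ (p - 1) * ww =
      ww ^ p * Polynomial.aeval (-(ww * dw) - (p : Weyl)) g *
        (((List.range (p - 1)).map (fun l => ww * dw + ((l + 1 : ℕ) : Weyl))).prod) := by
  obtain ⟨k, rfl⟩ : ∃ k, p = k + 1 := ⟨p - 1, (Nat.sub_add_cancel hp).symm⟩
  rw [Nat.add_sub_cancel, sq, mul_assoc ww, mul_assoc,
    mul_pow_mul_eq_pow_mul_prod semiconjBy_ww_euler, ← mul_assoc,
    aeval_neg_mul_pow semiconjBy_ww_euler]
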